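/- arXiv:1307.7760 — 8 statements merged into one kernel-verified Lean document; each statement's English description precedes it below -/
import Mathlib

section
/- For every probability measure μ on ℝ^d, the squared kernel distance to μ is 1-semiconcave: the map x ↦ (d^K_μ(x))² − ‖x‖² is concave on ℝ^d. -/
open MeasureTheory

noncomputable def gaussK {d : ℕ} (σ : ℝ) (p x : EuclideanSpace ℝ (Fin d)) : ℝ :=
  σ ^ 2 * Real.exp (-‖p - x‖ ^ 2 / (2 * σ ^ 2))

noncomputable def kap {d : ℕ} (σ : ℝ) (μ ν : Measure (EuclideanSpace ℝ (Fin d))) : ℝ :=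
  ∫ p, ∫ q, gaussK σ p q ∂ν ∂μ

noncomputable def DK {d : ℕ} (σ : ℝ) (μ ν : Measure (EuclideanSpace ℝ (Fin d))) : ℝ :=
  Real.sqrt (kap σ μ μ + kap σ ν ν - 2 * kap σ μ ν)

/-- kernel distance from a measure to a point -/
noncomputable def dKmu {d : ℕ} (σ : ℝ) (μ : Measure (EuclideanSpace ℝ (Fin d)))
    (x : EuclideanSpace ℝ (Fin d)) : ℝ :=
  DK σ μ (Measure.dirac x)

/-!
The Gaussian kernel is positive definite: it is, up to a constant, the `L²` inner product of
Gaussian smoothings, `κ(μ, ν) ∝ ∫ (G * μ) (G * ν)`, so `2 κ(μ, δₓ) ≤ κ(μ, μ) + κ(δₓ, δₓ)` and the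
square root defining `d^K_μ(x)` never truncates. Hence `d^K_μ(x)² - ‖x‖²` equals a constant minus
`∫ (2 K(p, x) + ‖x‖²) dμ(p)`, and each integrand is convex in `x`: it is
`ψ (‖x - p‖²)` plus an affine function, where `ψ t = c e^{-t/c} + t` (`c = 2σ²`) is convex and
nondecreasing on `[0, ∞)`.
-/

open Real Set

section Gaussian

variable {V : Type*} [NormedAddCommGroup V] {b : ℝ}

noncomputable def gaussian (b : ℝ) (w : V) : ℝ := exp (-b * ‖w‖ ^ 2)

lemma gaussian_pos (b : ℝ) (w : V) : 0 < gaussian b w := exp_pos _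

lemma norm_gaussian_le_one (hb : 0 ≤ b) (w : V) : ‖gaussian b w‖ ≤ 1 := by
  rw [norm_of_nonneg (gaussian_pos b w).le, gaussian, exp_le_one_iff]
  nlinarith [sq_nonneg ‖w‖]

@[fun_prop]
lemma continuous_gaussian (b : ℝ) : Continuous (gaussian b : V → ℝ) := by
  unfold gaussian
  fun_prop

lemma integrable_gaussian_comp [MeasurableSpace V] [BorelSpace V] {α : Type*} [MeasurableSpace α]
    {ρ : Measure α} [IsFiniteMeasure ρ] (hb : 0 ≤ b) {f : α → V} (hf : Measurable f) :
    Integrable (fun a => gaussian b (f a)) ρ :=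
  (integrable_const 1).mono' ((continuous_gaussian b).measurable.comp hf).aestronglyMeasurable
    (.of_forall fun a => norm_gaussian_le_one hb (f a))

noncomputable def gaussianConv [MeasurableSpace V] (b : ℝ) (μ : Measure V) (w : V) : ℝ :=
  ∫ p, gaussian b (p - w) ∂μ

lemma gaussianConv_nonneg [MeasurableSpace V] (μ : Measure V) (w : V) :
    0 ≤ gaussianConv b μ w :=
  integral_nonneg fun _ => (gaussian_pos b _).le

lemma gaussianConv_mul_gaussianConv [MeasurableSpace V] {μ ν : Measure V} [SFinite μ]
    [SFinite ν] (w : V) :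
    gaussianConv b μ w * gaussianConv b ν w =
      ∫ z, gaussian b (z.1 - w) * gaussian b (z.2 - w) ∂(μ.prod ν) :=
  (integral_prod_mul (fun p => gaussian b (p - w)) (fun q => gaussian b (q - w))).symm

variable [InnerProductSpace ℝ V]

-- completing the square, via the parallelogram law
lemma gaussian_mul_gaussian (b : ℝ) (p q w : V) :
    gaussian b (p - w) * gaussian b (q - w) =
      gaussian (b / 2) (p - q) * gaussian (2 * b) (w - (2⁻¹ : ℝ) • (p + q)) := by
  simp only [gaussian, ← exp_add]
  congr 1
  have h := parallelogram_law_with_norm ℝ (p - w) (q - w)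
  rw [show p - w + (q - w) = (-2 : ℝ) • (w - (2⁻¹ : ℝ) • (p + q)) by module,
    show p - w - (q - w) = p - q by abel, norm_smul] at h
  simp only [norm_neg, Real.norm_ofNat] at h
  linear_combination (b / 2) * h

variable [FiniteDimensional ℝ V] [MeasurableSpace V] [BorelSpace V]

lemma integrable_gaussian (hb : 0 < b) : Integrable (gaussian b : V → ℝ) := by
  have := (GaussianFourier.integrable_cexp_neg_mul_sq_norm_add (V := V) (b := (b : ℂ))
    (by simpa using hb) 0 0).re
  convert this using 2 with w
  simp [gaussian, ← Complex.ofReal_pow, ← Complex.ofReal_mul, ← Complex.ofReal_neg,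
    Complex.exp_ofReal_re]

lemma integral_gaussian_pos (hb : 0 < b) : 0 < ∫ w : V, gaussian b w := by
  rw [show (∫ w : V, gaussian b w) = _ from GaussianFourier.integral_rexp_neg_mul_sq_norm hb]
  positivity

lemma integral_gaussian_mul_gaussian (b : ℝ) (p q : V) :
    ∫ w, gaussian b (p - w) * gaussian b (q - w) =
      (∫ w : V, gaussian (2 * b) w) * gaussian (b / 2) (p - q) := by
  simp_rw [gaussian_mul_gaussian]
  rw [integral_const_mul, integral_sub_right_eq_self (gaussian (2 * b)), mul_comm]

variable {μ ν : Measure V} [IsFiniteMeasure μ] [IsFiniteMeasure ν]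

lemma integrable_gaussian_sub_mul_gaussian_sub (hb : 0 < b) :
    Integrable (fun x : V × V × V => gaussian b (x.2.1 - x.1) * gaussian b (x.2.2 - x.1))
      (volume.prod (μ.prod ν)) := by
  refine (integrable_prod_iff' (by fun_prop)).2 ⟨.of_forall fun z => ?_, ?_⟩
  · exact ((integrable_gaussian hb).comp_sub_left z.1).mul_bdd (by fun_prop)
      (.of_forall fun w => norm_gaussian_le_one hb.le _)
  · simp only [norm_mul, norm_of_nonneg (gaussian_pos _ _).le, integral_gaussian_mul_gaussian]
    exact (integrable_gaussian_comp (by positivity) (by fun_prop)).const_mul _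

lemma integrable_gaussianConv_mul (hb : 0 < b) :
    Integrable (fun w => gaussianConv b μ w * gaussianConv b ν w) := by
  simp_rw [gaussianConv_mul_gaussianConv]
  exact (integrable_gaussian_sub_mul_gaussian_sub hb).integral_prod_left

lemma integral_gaussianConv_mul (hb : 0 < b) :
    ∫ w, gaussianConv b μ w * gaussianConv b ν w =
      (∫ w : V, gaussian (2 * b) w) * ∫ p, ∫ q, gaussian (b / 2) (p - q) ∂ν ∂μ := by
  simp_rw [gaussianConv_mul_gaussianConv]
  rw [integral_integral_swap (integrable_gaussian_sub_mul_gaussian_sub hb)]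
  simp_rw [integral_gaussian_mul_gaussian]
  rw [integral_const_mul, integral_prod _ (integrable_gaussian_comp (by positivity) (by fun_prop))]

lemma two_mul_integral_gaussian_le (hb : 0 < b) :
    2 * ∫ p, ∫ q, gaussian b (p - q) ∂ν ∂μ ≤
      (∫ p, ∫ q, gaussian b (p - q) ∂μ ∂μ) + ∫ p, ∫ q, gaussian b (p - q) ∂ν ∂ν := by
  have h2b : (0 : ℝ) < 2 * b := by positivity
  have hI := integral_gaussian_pos (V := V) (by positivity : (0 : ℝ) < 2 * (2 * b))
  have hsmooth : ∀ (μ ν : Measure V) [IsFiniteMeasure μ] [IsFiniteMeasure ν],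
      ∫ p, ∫ q, gaussian b (p - q) ∂ν ∂μ = (∫ w : V, gaussian (2 * (2 * b)) w)⁻¹ *
        ∫ w, gaussianConv (2 * b) μ w * gaussianConv (2 * b) ν w := fun μ ν _ _ => by
    rw [integral_gaussianConv_mul h2b, mul_div_cancel_left₀ b two_ne_zero,
      inv_mul_cancel_left₀ hI.ne']
  rw [hsmooth μ ν, hsmooth μ μ, hsmooth ν ν, ← mul_add, mul_left_comm]
  gcongr
  rw [← integral_const_mul, ← integral_add (integrable_gaussianConv_mul h2b)
    (integrable_gaussianConv_mul h2b)]
  refine integral_mono_of_nonneg (.of_forall fun w => ?_)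
    ((integrable_gaussianConv_mul h2b).add (integrable_gaussianConv_mul h2b))
    (.of_forall fun w => ?_)
  · exact mul_nonneg zero_le_two (mul_nonneg (gaussianConv_nonneg μ w) (gaussianConv_nonneg ν w))
  · nlinarith [sq_nonneg (gaussianConv (2 * b) μ w - gaussianConv (2 * b) ν w)]

end Gaussian

section Convexity

variable {c : ℝ}

lemma convexOn_mul_exp_neg_div_add (hc : 0 ≤ c) :
    ConvexOn ℝ univ (fun t : ℝ => c * exp (-t / c) + t) := by
  have h := (convexOn_exp.comp_linearMap ((-c⁻¹) • LinearMap.id)).smul hc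
  refine h.add (LinearMap.id.convexOn convex_univ) |>.congr fun t _ => ?_
  simp [div_eq_inv_mul]

lemma monotoneOn_mul_exp_neg_div_add (hc : 0 < c) :
    MonotoneOn (fun t : ℝ => c * exp (-t / c) + t) (Ici 0) := by
  intro s (hs : 0 ≤ s) t _ hst
  have hexp : exp (-s / c) ≤ 1 :=
    exp_le_one_iff.2 (by rw [neg_div]; linarith [div_nonneg hs hc.le])
  have hsplit : exp (-t / c) = exp (-s / c) * exp (-((t - s) / c)) := by
    rw [← exp_add]; ring_nf
  -- `1 - exp (-u) ≤ u` and `exp (-s / c) ≤ 1` give `c * (exp (-s / c) - exp (-t / c)) ≤ t - s`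
  have h1 := add_one_le_exp (-((t - s) / c))
  have h2 : exp (-((t - s) / c)) ≤ 1 :=
    exp_le_one_iff.2 (neg_nonpos.2 (div_nonneg (by linarith) hc.le))
  have h3 : c * ((t - s) / c) = t - s := mul_div_cancel₀ _ hc.ne'
  show c * exp (-s / c) + s ≤ c * exp (-t / c) + t
  rw [hsplit]
  nlinarith [mul_le_mul_of_nonneg_left (mul_le_mul_of_nonneg_right hexp (sub_nonneg.2 h2)) hc.le]

lemma convexOn_mul_exp_neg_norm_sub_sq_div_add_norm_sq {E : Type*} [NormedAddCommGroup E]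
    [InnerProductSpace ℝ E] (hc : 0 < c) (p : E) :
    ConvexOn ℝ univ (fun x : E => c * exp (-‖x - p‖ ^ 2 / c) + ‖x‖ ^ 2) := by
  set g : E → ℝ := fun x => ‖x - p‖ ^ 2
  have hg : ConvexOn ℝ univ g :=
    ((convexOn_univ_dist p).pow (fun _ _ => dist_nonneg) 2).congr fun x _ => by
      simp [g, dist_eq_norm]
  -- the range of `g` is an interval since `E` is connected
  have hrange : Convex ℝ (g '' univ) :=
    (isPreconnected_univ.image g (by fun_prop)).ordConnected.convex
  have hnonneg : g '' univ ⊆ Ici 0 := by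
    rintro _ ⟨x, -, rfl⟩
    exact sq_nonneg ‖x - p‖
  have hcomp := ((convexOn_mul_exp_neg_div_add hc.le).subset (subset_univ _) hrange).comp hg
    ((monotoneOn_mul_exp_neg_div_add hc).mono hnonneg)
  refine (hcomp.add ((((2 : ℝ) • innerSL ℝ p : E →L[ℝ] ℝ) : E →ₗ[ℝ] ℝ).convexOn convex_univ)
    |>.add_const (-‖p‖ ^ 2)).congr fun x _ => ?_
  change c * exp (-‖x - p‖ ^ 2 / c) + ‖x - p‖ ^ 2 + 2 * inner ℝ p x + -‖p‖ ^ 2 = _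
  rw [norm_sub_sq_real, real_inner_comm]
  ring

lemma convexOn_integral {α E : Type*} [MeasurableSpace α] [AddCommGroup E] [Module ℝ E]
    {μ : Measure α} {s : Set E} {F : α → E → ℝ} (hF : ∀ p, ConvexOn ℝ s (F p))
    (hs : Convex ℝ s) (hint : ∀ x ∈ s, Integrable (fun p => F p x) μ) :
    ConvexOn ℝ s fun x => ∫ p, F p x ∂μ := by
  refine ⟨hs, fun x hx y hy a b ha hb hab => ?_⟩
  simp only [smul_eq_mul]
  rw [← integral_const_mul, ← integral_const_mul,
    ← integral_add ((hint x hx).const_mul a) ((hint y hy).const_mul b)]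
  exact integral_mono (hint _ (hs hx hy ha hb hab))
    (((hint x hx).const_mul a).add ((hint y hy).const_mul b)) fun p => (hF p).2 hx hy ha hb hab

end Convexity

section KernelDistance

variable {d : ℕ} {σ : ℝ}

local notation "E" => EuclideanSpace ℝ (Fin d)

lemma gaussK_eq_mul_gaussian (p x : E) :
    gaussK σ p x = σ ^ 2 * gaussian (2 * σ ^ 2)⁻¹ (p - x) := by
  rw [gaussK, gaussian, neg_div, div_eq_inv_mul, neg_mul]

lemma kap_eq_mul_integral_gaussian (μ ν : Measure E) :
    kap σ μ ν = σ ^ 2 * ∫ p, ∫ q, gaussian (2 * σ ^ 2)⁻¹ (p - q) ∂ν ∂μ := by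
  simp_rw [kap, gaussK_eq_mul_gaussian, integral_const_mul]

lemma two_mul_kap_le (hσ : σ ≠ 0) (μ ν : Measure E) [IsFiniteMeasure μ] [IsFiniteMeasure ν] :
    2 * kap σ μ ν ≤ kap σ μ μ + kap σ ν ν := by
  simp only [kap_eq_mul_integral_gaussian]
  have := two_mul_integral_gaussian_le (μ := μ) (ν := ν) (b := (2 * σ ^ 2)⁻¹) (by positivity)
  nlinarith [sq_nonneg σ]

lemma integrable_gaussK (μ : Measure E) [IsFiniteMeasure μ] (x : E) :
    Integrable (fun p => gaussK σ p x) μ := by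
  simp_rw [gaussK_eq_mul_gaussian]
  exact (integrable_gaussian_comp (by positivity) (by fun_prop)).const_mul _

lemma dKmu_sq (hσ : σ ≠ 0) (μ : Measure E) [IsFiniteMeasure μ] (x : E) :
    dKmu σ μ x ^ 2 = kap σ μ μ + σ ^ 2 - 2 * ∫ p, gaussK σ p x ∂μ := by
  have hdirac : kap σ (Measure.dirac x) (Measure.dirac x) = σ ^ 2 := by
    simp [kap, gaussK]
  have hmixed : kap σ μ (Measure.dirac x) = ∫ p, gaussK σ p x ∂μ := by
    simp [kap]
  rw [dKmu, DK, sq_sqrt (by linarith [two_mul_kap_le hσ μ (Measure.dirac x)]), hdirac, hmixed]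

lemma convexOn_two_mul_gaussK_add_norm_sq (hσ : σ ≠ 0) (p : E) :
    ConvexOn ℝ univ (fun x : E => 2 * gaussK σ p x + ‖x‖ ^ 2) :=
  (convexOn_mul_exp_neg_norm_sub_sq_div_add_norm_sq (by positivity : 0 < 2 * σ ^ 2) p).congr
    fun x _ => by rw [gaussK, norm_sub_rev]; ring

end KernelDistance

theorem kernel_distance_sq_semiconcave_general {d : ℕ} (σ : ℝ) (hσ : 0 < σ)
    (μ : Measure (EuclideanSpace ℝ (Fin d))) [IsProbabilityMeasure μ] :
    ConcaveOn ℝ Set.univ (fun x : EuclideanSpace ℝ (Fin d) => dKmu σ μ x ^ 2 - ‖x‖ ^ 2) := by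
  have hconv : ConvexOn ℝ univ fun x => ∫ p, (2 * gaussK σ p x + ‖x‖ ^ 2) ∂μ :=
    convexOn_integral (fun p => convexOn_two_mul_gaussK_add_norm_sq hσ.ne' p) convex_univ
      fun x _ => ((integrable_gaussK μ x).const_mul 2).add (integrable_const _)
  refine (hconv.neg.add_const (kap σ μ μ + σ ^ 2)).congr fun x _ => ?_
  rw [Pi.add_apply, Pi.neg_apply, dKmu_sq hσ.ne',
    integral_add ((integrable_gaussK μ x).const_mul 2) (integrable_const _), integral_const_mul,
    integral_const, probReal_univ, one_smul]
  ring

/-- The squared kernel distance to a probability measure is 1-semiconcave: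
`x ↦ (d^K_μ(x))² − ‖x‖²` is concave on `ℝ^d`. -/
theorem kernel_distance_sq_semiconcave {d : ℕ} (hd : 1 ≤ d) (σ : ℝ) (hσ : 0 < σ)
    (μ : Measure (EuclideanSpace ℝ (Fin d))) [IsProbabilityMeasure μ] :
    ConcaveOn ℝ Set.univ (fun x : EuclideanSpace ℝ (Fin d) => dKmu σ μ x ^ 2 - ‖x‖ ^ 2) :=
  kernel_distance_sq_semiconcave_general σ hσ μ
end

section
/- Let ℓ ≥ 1 be a real number and let g : ℝ^d → ℝ be twice continuously differentiable. If g² is ℓ-semiconcave, i.e. the map x ↦ (g(x))² − ℓ‖x‖² is concave on ℝ^d, then g is ℓ-Lipschitz: |g(x) − g(y)| ≤ ℓ·‖x − y‖ for all x, y ∈ ℝ^d. -/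
/-!
A concave differentiable function lies below its tangent planes; for `g ^ 2 - ℓ ‖·‖ ^ 2` at `x`
this gives `0 ≤ g (x + h) ^ 2 ≤ g x ^ 2 + 2 g x g'(x) h + ℓ ‖h‖ ^ 2`. When `g x ≠ 0`, the
discriminant of this quadratic in `t` for `h = t • u` forces `|g'(x) u| ≤ √ℓ ‖u‖`; when `g x = 0`
it reads `|g (x + h) - g x| ≤ √ℓ ‖h‖`, which bounds the derivative as well. The mean value
inequality then makes `g` `√ℓ`-Lipschitz, and `√ℓ ≤ ℓ` for `ℓ ≥ 1`.
-/

open Set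

theorem ConcaveOn.le_add_of_hasFDerivAt {E : Type*} [NormedAddCommGroup E] [NormedSpace ℝ E]
    {F : E → ℝ} {F' : E →L[ℝ] ℝ} {x : E}
    (hF : ConcaveOn ℝ univ F) (hF' : HasFDerivAt F F' x) (y : E) :
    F y ≤ F x + F' (y - x) := by
  let L : ℝ →ᵃ[ℝ] E := AffineMap.lineMap x y
  have hline : ConcaveOn ℝ univ (F ∘ L) := hF.comp_affineMap L
  have hF0 : HasFDerivAt F F' (L 0) := by simpa [L] using hF'
  have hderiv : HasDerivAt (F ∘ L) (F' (y - x)) 0 :=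
    hF0.comp_hasDerivAt 0 AffineMap.hasDerivAt_lineMap
  have hslope := hline.slope_le_of_hasDerivAt (mem_univ 0) (mem_univ 1) zero_lt_one hderiv
  simp only [slope_def_field, L, Function.comp_apply, AffineMap.lineMap_apply_zero,
    AffineMap.lineMap_apply_one, sub_zero, div_one] at hslope
  linarith

section

variable {E : Type*} [NormedAddCommGroup E] [InnerProductSpace ℝ E]

theorem sq_le_of_concaveOn_sq_sub_mul_norm_sq {g : E → ℝ} {g' : E →L[ℝ] ℝ} {ℓ : ℝ} {x : E}
    (hconc : ConcaveOn ℝ univ (fun x => g x ^ 2 - ℓ * ‖x‖ ^ 2)) (hg : HasFDerivAt g g' x)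
    (h : E) : g (x + h) ^ 2 ≤ g x ^ 2 + 2 * g x * g' h + ℓ * ‖h‖ ^ 2 := by
  have hF' : HasFDerivAt (fun x => g x ^ 2 - ℓ * ‖x‖ ^ 2)
      ((2 * g x) • g' - (2 * ℓ) • innerSL ℝ x) x := by
    refine ((hg.pow 2).sub ((hasFDerivAt_id x).norm_sq.const_mul ℓ)).congr_fderiv ?_
    ext u
    simp only [Nat.add_one_sub_one, pow_one, nsmul_eq_mul, Nat.cast_ofNat, id_eq,
      ContinuousLinearMap.comp_id, sub_apply, smul_apply, smul_eq_mul, coe_innerSL_apply]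
    ring
  have htangent := hconc.le_add_of_hasFDerivAt hF' (x + h)
  simp only [add_sub_cancel_left, sub_apply, smul_apply,
    innerSL_apply_apply, smul_eq_mul, norm_add_sq_real] at htangent
  linarith

theorem abs_le_sqrt_of_forall_quadratic_nonneg {a b c : ℝ} (ha : a ≠ 0)
    (h : ∀ r, 0 ≤ c * (r * r) + 2 * a * b * r + a ^ 2) : |b| ≤ √c := by
  have hdisc := discrim_le_zero h
  rw [discrim] at hdisc
  have ha2 : 0 < a ^ 2 := by positivity
  exact Real.abs_le_sqrt (by nlinarith)

theorem HasFDerivAt.norm_le_sqrt_of_sq_le {g : E → ℝ} {g' : E →L[ℝ] ℝ} {ℓ : ℝ} {x : E}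
    (hg : HasFDerivAt g g' x)
    (hquad : ∀ h, g (x + h) ^ 2 ≤ g x ^ 2 + 2 * g x * g' h + ℓ * ‖h‖ ^ 2) : ‖g'‖ ≤ √ℓ := by
  have sqrt_mul_norm (h : E) : √(ℓ * ‖h‖ ^ 2) = √ℓ * ‖h‖ := by
    rw [Real.sqrt_mul' _ (by positivity), Real.sqrt_sq (norm_nonneg h)]
  by_cases hx : g x = 0
  · refine hg.le_of_lip' (Real.sqrt_nonneg ℓ) (Filter.Eventually.of_forall fun y => ?_)
    have hy := hquad (y - x)
    rw [hx, add_sub_cancel] at hy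
    rw [hx, sub_zero, Real.norm_eq_abs, ← sqrt_mul_norm]
    exact Real.abs_le_sqrt (by linarith)
  · refine g'.opNorm_le_bound (Real.sqrt_nonneg ℓ) fun u => ?_
    rw [Real.norm_eq_abs, ← sqrt_mul_norm]
    refine abs_le_sqrt_of_forall_quadratic_nonneg hx fun r => ?_
    have hr := hquad (r • u)
    rw [map_smul, smul_eq_mul, norm_smul, Real.norm_eq_abs, mul_pow, sq_abs] at hr
    nlinarith [sq_nonneg (g (x + r • u))]

theorem abs_sub_le_sqrt_mul_of_concaveOn_sq_sub_mul_norm_sq {g : E → ℝ} {ℓ : ℝ}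
    (hg : Differentiable ℝ g) (hconc : ConcaveOn ℝ univ (fun x => g x ^ 2 - ℓ * ‖x‖ ^ 2))
    (x y : E) : |g x - g y| ≤ √ℓ * ‖x - y‖ := by
  have hbound (z : E) : ‖fderiv ℝ g z‖ ≤ √ℓ :=
    (hg z).hasFDerivAt.norm_le_sqrt_of_sq_le
      (sq_le_of_concaveOn_sq_sub_mul_norm_sq hconc (hg z).hasFDerivAt)
  exact convex_univ.norm_image_sub_le_of_norm_fderiv_le (fun z _ => hg z) (fun z _ => hbound z)
    (mem_univ y) (mem_univ x)

end

theorem semiconcave_implies_lipschitz_general {d : ℕ} (ℓ : ℝ) (hℓ : 1 ≤ ℓ)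
    (g : EuclideanSpace ℝ (Fin d) → ℝ) (hg : ContDiff ℝ 2 g)
    (hconc : ConcaveOn ℝ Set.univ (fun x : EuclideanSpace ℝ (Fin d) => g x ^ 2 - ℓ * ‖x‖ ^ 2)) :
    ∀ x y : EuclideanSpace ℝ (Fin d), |g x - g y| ≤ ℓ * ‖x - y‖ := by
  intro x y
  calc |g x - g y| ≤ √ℓ * ‖x - y‖ :=
        abs_sub_le_sqrt_mul_of_concaveOn_sq_sub_mul_norm_sq (hg.differentiable (by norm_num))
          hconc x y
    _ ≤ ℓ * ‖x - y‖ := by gcongr; exact Real.sqrt_le_self_iff.mpr (Or.inr hℓ)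

/-- If `ℓ ≥ 1` and `g : ℝ^d → ℝ` is twice continuously differentiable with `g²`
`ℓ`-semiconcave (i.e. `x ↦ g(x)² − ℓ‖x‖²` is concave), then `g` is `ℓ`-Lipschitz. -/
theorem semiconcave_implies_lipschitz {d : ℕ} (hd : 1 ≤ d) (ℓ : ℝ) (hℓ : 1 ≤ ℓ)
    (g : EuclideanSpace ℝ (Fin d) → ℝ) (hg : ContDiff ℝ 2 g)
    (hconc : ConcaveOn ℝ Set.univ (fun x : EuclideanSpace ℝ (Fin d) => g x ^ 2 - ℓ * ‖x‖ ^ 2)) :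
    ∀ x y : EuclideanSpace ℝ (Fin d), |g x - g y| ≤ ℓ * ‖x - y‖ :=
  semiconcave_implies_lipschitz_general ℓ hℓ g hg hconc
end

section
/- For every probability measure μ on ℝ^d, the kernel distance to μ is 1-Lipschitz: |d^K_μ(x) − d^K_μ(y)| ≤ ‖x − y‖ for all x, y ∈ ℝ^d. -/
open MeasureTheory

noncomputable def kde {d : ℕ} (σ : ℝ) (μ : Measure (EuclideanSpace ℝ (Fin d)))
    (x : EuclideanSpace ℝ (Fin d)) : ℝ :=
  ∫ p, gaussK σ p x ∂μ

/-- kernel distance between two points -/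
noncomputable def DKpt {d : ℕ} (σ : ℝ) (p q : EuclideanSpace ℝ (Fin d)) : ℝ :=
  DK σ (Measure.dirac p) (Measure.dirac q)

/-- kernel power distance with respect to a finite nonempty point set `P` -/
noncomputable def Kpow {d : ℕ} (σ : ℝ) (P : Finset (EuclideanSpace ℝ (Fin d)))
    (hP : P.Nonempty) (μ : Measure (EuclideanSpace ℝ (Fin d)))
    (x : EuclideanSpace ℝ (Fin d)) : ℝ :=
  Real.sqrt (P.inf' hP fun p => DKpt σ p x ^ 2 + dKmu σ μ p ^ 2)

/-! The Gaussian kernel has an explicit feature map into `L²(ℝ^d)`: a suitably scaled Gaussian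
`Φ x = c · exp (-‖· - x‖² / σ²)` satisfies `⟪Φ x, Φ y⟫ = K(x, y)`, because by Apollonius' theorem
the product of two such Gaussians is a Gaussian centred at the midpoint. Hence `d^K_μ(x)` is the
`L²` distance from `Φ x` to the mean embedding `∫ Φ dμ`, and the claim reduces to `Φ` being
1-Lipschitz, i.e. `2σ² (1 - exp (-‖x - y‖² / (2σ²))) ≤ ‖x - y‖²`, which is `1 - e^{-t} ≤ t`. -/

open Real RealInnerProductSpace

section GaussianIntegral

variable {V : Type*} [NormedAddCommGroup V] [InnerProductSpace ℝ V] [FiniteDimensional ℝ V]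
  [MeasurableSpace V] [BorelSpace V]

theorem integral_exp_neg_mul_dist_sq {b : ℝ} (hb : 0 < b) (x : V) :
    ∫ z : V, rexp (-b * dist z x ^ 2) = (π / b) ^ (Module.finrank ℝ V / 2 : ℝ) := by
  simp only [_root_.dist_eq_norm]
  rw [integral_sub_right_eq_self (fun z => rexp (-b * ‖z‖ ^ 2)) x,
    GaussianFourier.integral_rexp_neg_mul_sq_norm hb]

theorem integral_exp_neg_mul_dist_sq_add_dist_sq {b : ℝ} (hb : 0 < b) (x y : V) :
    ∫ z : V, rexp (-b * (dist z x ^ 2 + dist z y ^ 2))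
      = (π / (2 * b)) ^ (Module.finrank ℝ V / 2 : ℝ) * rexp (-b * dist x y ^ 2 / 2) := by
  have apollonius (z : V) : -b * (dist z x ^ 2 + dist z y ^ 2)
      = -(2 * b) * dist z (midpoint ℝ x y) ^ 2 + -b * dist x y ^ 2 / 2 := by
    rw [EuclideanGeometry.dist_sq_add_dist_sq_eq_two_mul_dist_midpoint_sq_add_half_dist_sq]
    ring
  simp_rw [apollonius, Real.exp_add, integral_mul_const,
    integral_exp_neg_mul_dist_sq (by positivity : 0 < 2 * b)]

end GaussianIntegral

theorem integral_integral_inner {X H : Type*} [MeasurableSpace X] [NormedAddCommGroup H]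
    [InnerProductSpace ℝ H] [CompleteSpace H] {μ ν : Measure X} {f g : X → H}
    (hf : Integrable f μ) (hg : Integrable g ν) :
    ∫ p, ∫ q, ⟪f p, g q⟫ ∂ν ∂μ = ⟪∫ p, f p ∂μ, ∫ q, g q ∂ν⟫ := by
  simp_rw [integral_inner (𝕜 := ℝ) hg, real_inner_comm (∫ q, g q ∂ν)]
  exact integral_inner hf _

section GaussianFeature

variable {d : ℕ}

-- Without the prefactor, the product of the features of `x` and `y` integrates to
-- `(π σ² / 2) ^ (d / 2) * exp (-‖x - y‖² / (2σ²))`; the prefactor turns this into `gaussK σ x y`.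
noncomputable def gaussFeature (σ : ℝ) (x z : EuclideanSpace ℝ (Fin d)) : ℝ :=
  σ / √((π * σ ^ 2 / 2) ^ ((d : ℝ) / 2)) * rexp (-(σ ^ 2)⁻¹ * dist z x ^ 2)

theorem integral_gaussFeature_mul (σ : ℝ) (x y : EuclideanSpace ℝ (Fin d)) :
    ∫ z, gaussFeature σ x z * gaussFeature σ y z = gaussK σ x y := by
  rcases eq_or_ne σ 0 with rfl | hσ
  · simp [gaussFeature, gaussK]
  have hc : 0 < (π * σ ^ 2 / 2) ^ ((d : ℝ) / 2) := by positivity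
  have hb : 0 < (σ ^ 2)⁻¹ := by positivity
  simp_rw [gaussFeature, mul_mul_mul_comm, ← Real.exp_add, ← mul_add, integral_const_mul,
    integral_exp_neg_mul_dist_sq_add_dist_sq hb, finrank_euclideanSpace_fin]
  have hπ : π / (2 * (σ ^ 2)⁻¹) = π * σ ^ 2 / 2 := by field_simp
  have hexp : -(σ ^ 2)⁻¹ * dist x y ^ 2 / 2 = -dist x y ^ 2 / (2 * σ ^ 2) := by ring
  rw [hπ, hexp, div_mul_div_comm, ← sq, ← sq, sq_sqrt hc.le, gaussK, ← _root_.dist_eq_norm]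
  field_simp

theorem memLp_gaussFeature (σ : ℝ) (x : EuclideanSpace ℝ (Fin d)) :
    MemLp (gaussFeature σ x) 2 := by
  rcases eq_or_ne σ 0 with rfl | hσ
  · have : gaussFeature 0 x = 0 := by funext z; simp [gaussFeature]
    rw [this]
    exact .zero
  refine (memLp_two_iff_integrable_sq (by unfold gaussFeature; fun_prop)).2 ?_
  simp_rw [sq]
  -- a non-integrable function has integral `0`, while this one has integral `σ ^ 2`
  exact .of_integral_ne_zero (by rw [integral_gaussFeature_mul]; simp [gaussK, hσ])

noncomputable def gaussEmbedding (σ : ℝ) (x : EuclideanSpace ℝ (Fin d)) :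
    Lp ℝ 2 (volume : Measure (EuclideanSpace ℝ (Fin d))) :=
  (memLp_gaussFeature σ x).toLp _

theorem inner_gaussEmbedding (σ : ℝ) (x y : EuclideanSpace ℝ (Fin d)) :
    ⟪gaussEmbedding σ x, gaussEmbedding σ y⟫ = gaussK σ x y := by
  rw [L2.inner_def, ← integral_gaussFeature_mul]
  refine integral_congr_ae ?_
  filter_upwards [(memLp_gaussFeature σ x).coeFn_toLp, (memLp_gaussFeature σ y).coeFn_toLp]
    with z hx hy
  simp [gaussEmbedding, hx, hy, mul_comm]

theorem gaussK_self (σ : ℝ) (x : EuclideanSpace ℝ (Fin d)) : gaussK σ x x = σ ^ 2 := by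
  simp [gaussK]

theorem norm_gaussEmbedding (σ : ℝ) (x : EuclideanSpace ℝ (Fin d)) :
    ‖gaussEmbedding σ x‖ = |σ| := by
  rw [norm_eq_sqrt_real_inner, inner_gaussEmbedding, gaussK_self, sqrt_sq_eq_abs]

theorem dist_gaussEmbedding_sq (σ : ℝ) (x y : EuclideanSpace ℝ (Fin d)) :
    dist (gaussEmbedding σ x) (gaussEmbedding σ y) ^ 2 = 2 * σ ^ 2 - 2 * gaussK σ x y := by
  rw [_root_.dist_eq_norm, norm_sub_sq_real, inner_gaussEmbedding, norm_gaussEmbedding,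
    norm_gaussEmbedding, sq_abs]
  ring

theorem two_mul_sq_sub_two_mul_gaussK_le (σ : ℝ) (x y : EuclideanSpace ℝ (Fin d)) :
    2 * σ ^ 2 - 2 * gaussK σ x y ≤ dist x y ^ 2 := by
  rcases eq_or_ne σ 0 with rfl | hσ
  · simp [gaussK]
  have h := add_one_le_exp (-dist x y ^ 2 / (2 * σ ^ 2))
  rw [gaussK, ← _root_.dist_eq_norm]
  calc 2 * σ ^ 2 - 2 * (σ ^ 2 * rexp (-dist x y ^ 2 / (2 * σ ^ 2)))
      = 2 * σ ^ 2 * (1 - rexp (-dist x y ^ 2 / (2 * σ ^ 2))) := by ring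
    _ ≤ 2 * σ ^ 2 * (dist x y ^ 2 / (2 * σ ^ 2)) := by
      gcongr
      linarith [neg_div (2 * σ ^ 2) (dist x y ^ 2)]
    _ = dist x y ^ 2 := by field_simp

theorem lipschitzWith_gaussEmbedding (σ : ℝ) :
    LipschitzWith 1 (gaussEmbedding (d := d) σ) :=
  .of_dist_le_mul fun x y => by
    rw [NNReal.coe_one, one_mul, ← pow_le_pow_iff_left₀ dist_nonneg dist_nonneg two_ne_zero,
      dist_gaussEmbedding_sq]
    exact two_mul_sq_sub_two_mul_gaussK_le σ x y

theorem integrable_gaussEmbedding (σ : ℝ) (μ : Measure (EuclideanSpace ℝ (Fin d)))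
    [IsFiniteMeasure μ] : Integrable (gaussEmbedding σ) μ :=
  .of_bound (lipschitzWith_gaussEmbedding σ).continuous.aestronglyMeasurable |σ|
    (.of_forall fun x => (norm_gaussEmbedding σ x).le)

noncomputable def kernelMeanEmbedding (σ : ℝ) (μ : Measure (EuclideanSpace ℝ (Fin d))) :
    Lp ℝ 2 (volume : Measure (EuclideanSpace ℝ (Fin d))) :=
  ∫ p, gaussEmbedding σ p ∂μ

theorem kernelMeanEmbedding_dirac (σ : ℝ) (x : EuclideanSpace ℝ (Fin d)) :
    kernelMeanEmbedding σ (Measure.dirac x) = gaussEmbedding σ x :=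
  integral_dirac _ x

theorem kap_eq_inner (σ : ℝ) (μ ν : Measure (EuclideanSpace ℝ (Fin d)))
    [IsFiniteMeasure μ] [IsFiniteMeasure ν] :
    kap σ μ ν = ⟪kernelMeanEmbedding σ μ, kernelMeanEmbedding σ ν⟫ := by
  simp_rw [kap, ← inner_gaussEmbedding]
  exact integral_integral_inner (integrable_gaussEmbedding σ μ) (integrable_gaussEmbedding σ ν)

theorem DK_eq_dist (σ : ℝ) (μ ν : Measure (EuclideanSpace ℝ (Fin d)))
    [IsFiniteMeasure μ] [IsFiniteMeasure ν] :
    DK σ μ ν = dist (kernelMeanEmbedding σ μ) (kernelMeanEmbedding σ ν) := by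
  rw [DK, kap_eq_inner, kap_eq_inner, kap_eq_inner, _root_.dist_eq_norm, norm_eq_sqrt_real_inner,
    inner_sub_sub_self, real_inner_comm (kernelMeanEmbedding σ μ) (kernelMeanEmbedding σ ν)]
  ring_nf

theorem lipschitzWith_dKmu (σ : ℝ) (μ : Measure (EuclideanSpace ℝ (Fin d)))
    [IsFiniteMeasure μ] :
    LipschitzWith 1 (dKmu σ μ) := by
  have h : dKmu σ μ = fun x => dist (kernelMeanEmbedding σ μ) (gaussEmbedding σ x) := by
    funext x
    rw [dKmu, DK_eq_dist, kernelMeanEmbedding_dirac]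
  rw [h, ← one_mul 1]
  exact (LipschitzWith.dist_right _).comp (lipschitzWith_gaussEmbedding σ)

end GaussianFeature

theorem kernel_distance_lipschitz_general {d : ℕ} (σ : ℝ)
    (μ : Measure (EuclideanSpace ℝ (Fin d))) [IsProbabilityMeasure μ] :
    ∀ x y : EuclideanSpace ℝ (Fin d), |dKmu σ μ x - dKmu σ μ y| ≤ ‖x - y‖ := by
  intro x y
  simpa [Real.dist_eq, _root_.dist_eq_norm] using (lipschitzWith_dKmu σ μ).dist_le_mul x y

/-- The kernel distance to a probability measure is 1-Lipschitz:
`|d^K_μ(x) − d^K_μ(y)| ≤ ‖x − y‖` for all `x, y ∈ ℝ^d`. -/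
theorem kernel_distance_lipschitz {d : ℕ} (hd : 1 ≤ d) (σ : ℝ) (hσ : 0 < σ)
    (μ : Measure (EuclideanSpace ℝ (Fin d))) [IsProbabilityMeasure μ] :
    ∀ x y : EuclideanSpace ℝ (Fin d), |dKmu σ μ x - dKmu σ μ y| ≤ ‖x - y‖ :=
  kernel_distance_lipschitz_general σ μ
end

section
/- Let μ be a probability measure on ℝ^d and let p₊ ∈ ℝ^d satisfy κ(μ, δ_q) ≤ κ(μ, δ_{p₊}) for all q ∈ ℝ^d (i.e., p₊ maximizes kde_μ over ℝ^d). Then for every x ∈ ℝ^d, Kpow_{{p₊}}(μ,x) = √(D_K(p₊,x)² + d^K_μ(p₊)²) ≤ √14 · D_K(μ, δ_x). -/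
/-!
Up to the positive constant `c = featureConst d σ`, the Gaussian kernel is the `L²(ℝ^d)` inner
product of Gaussian bumps: `∫ φ_p φ_q = c · K(p,q)` for `φ_y(t) = exp(-‖t - y‖² / σ²)`, by
completing the square around the midpoint of `p` and `q`. Averaging the bumps against a finite
measure `μ` gives its mean embedding `Φ_μ`, with `∫ Φ_μ Φ_ν = c · κ(μ,ν)`, so
`c · D_K(μ,ν)² = ‖Φ_μ - Φ_ν‖²_{L²}`. Hence `D_K` is symmetric and
`D_K(μ,ν)² ≤ 2 D_K(μ,ρ)² + 2 D_K(ρ,ν)²`. Since `p₊` maximises `κ(μ, δ_·)`,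
`d^K_μ(p₊) ≤ D_K(μ, δ_x)`, and so `D_K(p₊,x)² + d^K_μ(p₊)² ≤ 5 D_K(μ, δ_x)²`.
-/

open MeasureTheory

namespace KernelDistance

open Real

variable {d : ℕ} {σ : ℝ}

local notation "E" => EuclideanSpace ℝ (Fin d)

noncomputable def gaussFeature (σ : ℝ) (y t : EuclideanSpace ℝ (Fin d)) : ℝ :=
  exp (-(1 / σ ^ 2) * ‖t - y‖ ^ 2)

noncomputable def featureConst (d : ℕ) (σ : ℝ) : ℝ :=
  (∫ t : EuclideanSpace ℝ (Fin d), exp (-(2 / σ ^ 2) * ‖t‖ ^ 2)) / σ ^ 2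

noncomputable def meanEmbedding (σ : ℝ) (μ : Measure (EuclideanSpace ℝ (Fin d)))
    (t : EuclideanSpace ℝ (Fin d)) : ℝ :=
  ∫ p, gaussFeature σ p t ∂μ

theorem continuous_gaussFeature (σ : ℝ) :
    Continuous fun z : E × E => gaussFeature σ z.1 z.2 := by
  unfold gaussFeature; fun_prop

theorem gaussFeature_nonneg (σ : ℝ) (y t : E) : 0 ≤ gaussFeature σ y t := exp_nonneg _

theorem norm_gaussFeature_le_one (σ : ℝ) (y t : E) : ‖gaussFeature σ y t‖ ≤ 1 := by
  rw [norm_of_nonneg (gaussFeature_nonneg σ y t), gaussFeature, exp_le_one_iff, neg_mul]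
  exact neg_nonpos.mpr (by positivity)

theorem integral_exp_neg_mul_sq_norm_pos {b : ℝ} (hb : 0 < b) :
    0 < ∫ t : E, exp (-b * ‖t‖ ^ 2) := by
  rw [GaussianFourier.integral_rexp_neg_mul_sq_norm hb]
  positivity

theorem integral_gaussFeature (σ : ℝ) (y : E) :
    ∫ t, gaussFeature σ y t = ∫ t : E, exp (-(1 / σ ^ 2) * ‖t‖ ^ 2) :=
  integral_sub_right_eq_self (fun t : E => exp (-(1 / σ ^ 2) * ‖t‖ ^ 2)) y

theorem integrable_gaussFeature (hσ : σ ≠ 0) (y : E) : Integrable (gaussFeature σ y) :=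
  Integrable.of_integral_ne_zero <| by
    rw [integral_gaussFeature]
    exact (integral_exp_neg_mul_sq_norm_pos (by positivity)).ne'

theorem norm_sub_sq_add_norm_sub_sq (p q t : E) :
    ‖t - p‖ ^ 2 + ‖t - q‖ ^ 2 = ‖p - q‖ ^ 2 / 2 + 2 * ‖t - (2 : ℝ)⁻¹ • (p + q)‖ ^ 2 := by
  have h := parallelogram_law_with_norm ℝ (t - p) (t - q)
  rw [show t - p + (t - q) = (2 : ℝ) • (t - (2 : ℝ)⁻¹ • (p + q)) by module,
    show t - p - (t - q) = -(p - q) by abel, norm_neg, norm_smul, Real.norm_two] at h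
  linarith

theorem gaussFeature_mul_gaussFeature (hσ : σ ≠ 0) (p q t : E) :
    gaussFeature σ p t * gaussFeature σ q t
      = exp (-‖p - q‖ ^ 2 / (2 * σ ^ 2)) *
          exp (-(2 / σ ^ 2) * ‖t - (2 : ℝ)⁻¹ • (p + q)‖ ^ 2) := by
  rw [gaussFeature, gaussFeature, ← exp_add, ← exp_add]
  congr 1
  have h := norm_sub_sq_add_norm_sub_sq p q t
  generalize (2 : ℝ)⁻¹ • (p + q) = m at h ⊢
  field_simp
  linear_combination (-2) * h

theorem integral_gaussFeature_mul (hσ : σ ≠ 0) (p q : E) :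
    ∫ t, gaussFeature σ p t * gaussFeature σ q t = featureConst d σ * gaussK σ p q := by
  simp_rw [gaussFeature_mul_gaussFeature hσ, integral_const_mul,
    integral_sub_right_eq_self (fun t : E => exp (-(2 / σ ^ 2) * ‖t‖ ^ 2)), featureConst, gaussK]
  field_simp

theorem featureConst_pos (hσ : σ ≠ 0) : 0 < featureConst d σ :=
  div_pos (integral_exp_neg_mul_sq_norm_pos (by positivity)) (by positivity)


theorem gaussK_comm (σ : ℝ) (p q : E) : gaussK σ p q = gaussK σ q p := by
  rw [gaussK, gaussK, norm_sub_rev]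

section MeanEmbedding

variable (μ ν : Measure (EuclideanSpace ℝ (Fin d))) [IsFiniteMeasure μ] [IsFiniteMeasure ν]

theorem stronglyMeasurable_meanEmbedding : StronglyMeasurable (meanEmbedding σ μ) :=
  (continuous_gaussFeature σ).stronglyMeasurable.integral_prod_left

theorem norm_meanEmbedding_le (t : E) : ‖meanEmbedding σ μ t‖ ≤ μ.real Set.univ :=
  (norm_integral_le_of_norm_le_const
    (Filter.Eventually.of_forall fun p => norm_gaussFeature_le_one σ p t)).trans_eq (one_mul _)

theorem integrable_gaussFeature_prod (hσ : σ ≠ 0) :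
    Integrable (fun z : E × E => gaussFeature σ z.1 z.2) (μ.prod volume) := by
  refine (integrable_prod_iff (continuous_gaussFeature σ).aestronglyMeasurable).mpr
    ⟨Filter.Eventually.of_forall (integrable_gaussFeature hσ), ?_⟩
  simp_rw [fun p t => norm_of_nonneg (gaussFeature_nonneg σ p t), integral_gaussFeature]
  exact integrable_const _

theorem integrable_meanEmbedding (hσ : σ ≠ 0) : Integrable (meanEmbedding σ μ) :=
  (integrable_gaussFeature_prod μ hσ).integral_prod_right

theorem integral_meanEmbedding_mul (hσ : σ ≠ 0) {g : E → ℝ} {C : ℝ}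
    (hg : AEStronglyMeasurable g) (hgC : ∀ t, ‖g t‖ ≤ C) :
    ∫ t, meanEmbedding σ μ t * g t = ∫ p, (∫ t, gaussFeature σ p t * g t) ∂μ := by
  simp_rw [meanEmbedding, ← integral_mul_const]
  have h : Integrable (Function.uncurry fun p t => gaussFeature σ p t * g t) (μ.prod volume) :=
    (integrable_gaussFeature_prod μ hσ).mul_bdd hg.comp_snd (Filter.Eventually.of_forall (hgC ·.2))
  exact (integral_integral_swap h).symm

theorem integral_gaussFeature_mul_meanEmbedding (hσ : σ ≠ 0) (y : E) :
    ∫ t, gaussFeature σ y t * meanEmbedding σ ν t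
      = featureConst d σ * ∫ q, gaussK σ y q ∂ν := by
  conv_lhs => enter [2, t]; rw [mul_comm]
  rw [integral_meanEmbedding_mul ν hσ (g := gaussFeature σ y)
    ((continuous_gaussFeature σ).comp (Continuous.prodMk_right y)).aestronglyMeasurable
    (norm_gaussFeature_le_one σ y)]
  simp_rw [integral_gaussFeature_mul hσ, integral_const_mul,
    gaussK_comm σ _ y]

theorem integral_meanEmbedding_mul_meanEmbedding (hσ : σ ≠ 0) :
    ∫ t, meanEmbedding σ μ t * meanEmbedding σ ν t = featureConst d σ * kap σ μ ν := by
  rw [integral_meanEmbedding_mul μ hσ (g := meanEmbedding σ ν)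
    (stronglyMeasurable_meanEmbedding ν).aestronglyMeasurable
    (norm_meanEmbedding_le ν)]
  simp_rw [integral_gaussFeature_mul_meanEmbedding ν hσ, integral_const_mul, kap]

theorem integrable_meanEmbedding_mul (hσ : σ ≠ 0) :
    Integrable fun t => meanEmbedding σ μ t * meanEmbedding σ ν t :=
  (integrable_meanEmbedding ν hσ).bdd_mul (stronglyMeasurable_meanEmbedding μ).aestronglyMeasurable
    (Filter.Eventually.of_forall (norm_meanEmbedding_le μ))

theorem integral_sq_meanEmbedding_sub (hσ : σ ≠ 0) :
    ∫ t, (meanEmbedding σ μ t - meanEmbedding σ ν t) ^ 2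
      = featureConst d σ * (kap σ μ μ + kap σ ν ν - 2 * kap σ μ ν) := by
  have hμμ := integrable_meanEmbedding_mul μ μ hσ
  have hcross := (integrable_meanEmbedding_mul μ ν hσ).const_mul 2
  have hνν := integrable_meanEmbedding_mul ν ν hσ
  have hμμ_sub : Integrable fun t =>
      meanEmbedding σ μ t * meanEmbedding σ μ t - 2 * (meanEmbedding σ μ t * meanEmbedding σ ν t) :=
    hμμ.sub hcross
  simp_rw [sub_sq, sq, mul_assoc]
  rw [integral_add hμμ_sub hνν, integral_sub hμμ hcross, integral_const_mul,
    integral_meanEmbedding_mul_meanEmbedding μ μ hσ,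
    integral_meanEmbedding_mul_meanEmbedding μ ν hσ,
    integral_meanEmbedding_mul_meanEmbedding ν ν hσ]
  ring

theorem integrable_sq_meanEmbedding_sub (hσ : σ ≠ 0) :
    Integrable fun t => (meanEmbedding σ μ t - meanEmbedding σ ν t) ^ 2 := by
  have h := (integrable_meanEmbedding μ hσ).sub (integrable_meanEmbedding ν hσ)
  simp_rw [sq]
  refine h.bdd_mul (c := μ.real Set.univ + ν.real Set.univ) h.aestronglyMeasurable
    (Filter.Eventually.of_forall fun t => ?_)
  exact (norm_sub_le _ _).trans (add_le_add (norm_meanEmbedding_le μ t) (norm_meanEmbedding_le ν t))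

end MeanEmbedding

theorem DK_nonneg (σ : ℝ) (μ ν : Measure E) : 0 ≤ DK σ μ ν := sqrt_nonneg _

section Distance

variable (μ ν ρ : Measure (EuclideanSpace ℝ (Fin d)))
  [IsFiniteMeasure μ] [IsFiniteMeasure ν] [IsFiniteMeasure ρ]

theorem DK_sq_eq (hσ : σ ≠ 0) :
    DK σ μ ν ^ 2 = (featureConst d σ)⁻¹ * ∫ t, (meanEmbedding σ μ t - meanEmbedding σ ν t) ^ 2 := by
  have h : kap σ μ μ + kap σ ν ν - 2 * kap σ μ ν
      = (featureConst d σ)⁻¹ * ∫ t, (meanEmbedding σ μ t - meanEmbedding σ ν t) ^ 2 := by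
    rw [integral_sq_meanEmbedding_sub μ ν hσ, inv_mul_cancel_left₀ (featureConst_pos hσ).ne']
  rw [DK, h, sq_sqrt]
  exact mul_nonneg (inv_nonneg.mpr (featureConst_pos hσ).le) (integral_nonneg fun t => sq_nonneg _)

theorem DK_comm (hσ : σ ≠ 0) : DK σ μ ν = DK σ ν μ := by
  rw [← sqrt_sq (DK_nonneg σ μ ν), ← sqrt_sq (DK_nonneg σ ν μ),
    DK_sq_eq μ ν hσ, DK_sq_eq ν μ hσ]
  simp_rw [← neg_sub (meanEmbedding σ μ _), neg_sq]

theorem DK_sq_le_two_mul_add (hσ : σ ≠ 0) :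
    DK σ μ ν ^ 2 ≤ 2 * DK σ μ ρ ^ 2 + 2 * DK σ ρ ν ^ 2 := by
  have hint : ∫ t, (meanEmbedding σ μ t - meanEmbedding σ ν t) ^ 2
      ≤ ∫ t, (2 * (meanEmbedding σ μ t - meanEmbedding σ ρ t) ^ 2
        + 2 * (meanEmbedding σ ρ t - meanEmbedding σ ν t) ^ 2) :=
    integral_mono (integrable_sq_meanEmbedding_sub μ ν hσ)
      (((integrable_sq_meanEmbedding_sub μ ρ hσ).const_mul 2).add
        ((integrable_sq_meanEmbedding_sub ρ ν hσ).const_mul 2))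
      fun t => by nlinarith [sq_nonneg (meanEmbedding σ μ t - 2 * meanEmbedding σ ρ t
        + meanEmbedding σ ν t)]
  rw [integral_add ((integrable_sq_meanEmbedding_sub μ ρ hσ).const_mul 2)
    ((integrable_sq_meanEmbedding_sub ρ ν hσ).const_mul 2), integral_const_mul,
    integral_const_mul] at hint
  rw [DK_sq_eq μ ν hσ, DK_sq_eq μ ρ hσ, DK_sq_eq ρ ν hσ]
  nlinarith [inv_nonneg.mpr (featureConst_pos (d := d) hσ).le]

end Distance

theorem kap_dirac_self (σ : ℝ) (y : E) : kap σ (Measure.dirac y) (Measure.dirac y) = σ ^ 2 := by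
  simp [kap, gaussK]

theorem DK_dirac_le_DK_dirac (μ : Measure E) {p x : E}
    (h : kap σ μ (Measure.dirac x) ≤ kap σ μ (Measure.dirac p)) :
    DK σ μ (Measure.dirac p) ≤ DK σ μ (Measure.dirac x) := by
  rw [DK, DK, kap_dirac_self, kap_dirac_self]
  exact sqrt_le_sqrt (by linarith)

end KernelDistance

open KernelDistance

theorem kernel_power_distance_pPlus_general {d : ℕ} (σ : ℝ) (hσ : 0 < σ)
    (μ : Measure (EuclideanSpace ℝ (Fin d))) [IsProbabilityMeasure μ]
    (pPlus : EuclideanSpace ℝ (Fin d))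
    (hmax : ∀ q : EuclideanSpace ℝ (Fin d),
      kap σ μ (Measure.dirac q) ≤ kap σ μ (Measure.dirac pPlus)) :
    ∀ x : EuclideanSpace ℝ (Fin d),
      Real.sqrt (DKpt σ pPlus x ^ 2 + dKmu σ μ pPlus ^ 2)
        ≤ Real.sqrt 14 * DK σ μ (Measure.dirac x) := by
  intro x
  have hnear : dKmu σ μ pPlus ≤ DK σ μ (Measure.dirac x) := DK_dirac_le_DK_dirac μ (hmax x)
  have htri : DKpt σ pPlus x ^ 2 ≤ 2 * dKmu σ μ pPlus ^ 2 + 2 * DK σ μ (Measure.dirac x) ^ 2 := by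
    rw [dKmu, DK_comm μ _ hσ.ne']
    exact DK_sq_le_two_mul_add _ _ μ hσ.ne'
  have hnear_sq : dKmu σ μ pPlus ^ 2 ≤ DK σ μ (Measure.dirac x) ^ 2 :=
    pow_le_pow_left₀ (DK_nonneg _ _ _) hnear 2
  rw [← Real.sqrt_sq (DK_nonneg σ μ (Measure.dirac x)),
    ← Real.sqrt_mul (by norm_num)]
  exact Real.sqrt_le_sqrt (by linarith [sq_nonneg (DK σ μ (Measure.dirac x))])

/-- With `p₊` maximizing `kde_μ`, the one-point kernel power distance satisfies
`√(D_K(p₊,x)² + d^K_μ(p₊)²) ≤ √14 · D_K(μ, δ_x)`. -/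
theorem kernel_power_distance_pPlus {d : ℕ} (hd : 1 ≤ d) (σ : ℝ) (hσ : 0 < σ)
    (μ : Measure (EuclideanSpace ℝ (Fin d))) [IsProbabilityMeasure μ]
    (pPlus : EuclideanSpace ℝ (Fin d))
    (hmax : ∀ q : EuclideanSpace ℝ (Fin d),
      kap σ μ (Measure.dirac q) ≤ kap σ μ (Measure.dirac pPlus)) :
    ∀ x : EuclideanSpace ℝ (Fin d),
      Real.sqrt (DKpt σ pPlus x ^ 2 + dKmu σ μ pPlus ^ 2)
        ≤ Real.sqrt 14 * DK σ μ (Measure.dirac x) :=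
  kernel_power_distance_pPlus_general σ hσ μ pPlus hmax
end

section
/- Let P ⊆ ℝ^d be a finite nonempty set with empirical measure μ_P, let p₊ ∈ ℝ^d satisfy κ(μ_P, δ_q) ≤ κ(μ_P, δ_{p₊}) for all q ∈ ℝ^d (i.e., p₊ maximizes kde_{μ_P}), and suppose p̂₊ ∈ ℝ^d satisfies D_K(μ_P, δ_{p̂₊}) ≤ (3/2)·D_K(μ_P, δ_{p₊}). Then for every x ∈ ℝ^d, Kpow_{P ∪ {p̂₊}}(μ_P, x) ≤ √71 · D_K(μ_P, δ_x). -/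
open MeasureTheory

open scoped Classical in
/-- The empirical measure of a finite nonempty point set: mass `1/|P|` at each point of `P`. -/
noncomputable def empMeasure {d : ℕ} (P : Finset (EuclideanSpace ℝ (Fin d))) :
    Measure (EuclideanSpace ℝ (Fin d)) :=
  (P.card : ENNReal)⁻¹ • ∑ p ∈ P, Measure.dirac p

/-!
Completing the square, `K(p, q) = σ² / I · ∫ φ_p φ_q` for the Gaussian bumps
`φ_p(z) = exp (-‖p - z‖² / σ²)`, so `K` is the inner product of a feature map `Φ` into `L²`,
and every kernel distance in the statement is a Hilbert-space distance: `D_K(p, q) = ‖Φ p - Φ q‖`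
and `d^K_{μ_P}(y) = ‖m - Φ y‖` for the mean embedding `m` of `P`. With `c = d^K_{μ_P}(x)`,
maximality of `p₊` gives `d^K_{μ_P}(p̂₊) ≤ 3c/2`, the triangle inequality through `m` gives
`D_K(p̂₊, x) ≤ 5c/2`, and taking `p = p̂₊` in the minimum bounds `Kpow²` by `(25/4 + 9/4) c² ≤ 71 c²`.
-/

open Real InnerProductSpace

namespace GaussianKernel

lemma inner_toLp_toLp {α : Type*} [MeasurableSpace α] {μ : Measure α} {f g : α → ℝ}
    (hf : MemLp f 2 μ) (hg : MemLp g 2 μ) :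
    ⟪hf.toLp f, hg.toLp g⟫_ℝ = ∫ a, f a * g a ∂μ := by
  rw [L2.inner_def]
  refine integral_congr_ae ?_
  filter_upwards [hf.coeFn_toLp, hg.coeFn_toLp] with a hfa hga
  rw [hfa, hga, real_inner_eq_re_inner, RCLike.inner_apply, conj_trivial, mul_comm]
  rfl

section Bump

variable {V : Type*} [NormedAddCommGroup V] [InnerProductSpace ℝ V]

noncomputable def gaussBump (σ : ℝ) (p z : V) : ℝ := exp (-‖p - z‖ ^ 2 / σ ^ 2)

lemma gaussBump_mul_gaussBump {σ : ℝ} (hσ : σ ≠ 0) (p q z : V) :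
    gaussBump σ p z * gaussBump σ q z
      = exp (-‖p - q‖ ^ 2 / (2 * σ ^ 2)) * exp (-(2 / σ ^ 2) * ‖z - (2 : ℝ)⁻¹ • (p + q)‖ ^ 2) := by
  set m : V := (2 : ℝ)⁻¹ • (p + q)
  have par := parallelogram_law_with_norm ℝ (p - z) (q - z)
  rw [show p - z + (q - z) = (2 : ℝ) • (m - z) by module, sub_sub_sub_cancel_right,
    norm_smul, Real.norm_two, norm_sub_rev m z] at par
  rw [gaussBump, gaussBump, ← exp_add, ← exp_add]
  congr 1
  field_simp
  linear_combination par

variable [FiniteDimensional ℝ V] [MeasurableSpace V] [BorelSpace V]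

lemma integral_exp_neg_mul_sq_norm_pos {b : ℝ} (hb : 0 < b) :
    0 < ∫ z : V, exp (-b * ‖z‖ ^ 2) := by
  rw [GaussianFourier.integral_rexp_neg_mul_sq_norm hb]
  positivity

lemma integrable_exp_neg_mul_sq_norm {b : ℝ} (hb : 0 < b) :
    Integrable fun z : V => exp (-b * ‖z‖ ^ 2) :=
  .of_integral_ne_zero (integral_exp_neg_mul_sq_norm_pos hb).ne'

lemma integral_gaussBump_mul_gaussBump {σ : ℝ} (hσ : σ ≠ 0) (p q : V) :
    ∫ z, gaussBump σ p z * gaussBump σ q z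
      = exp (-‖p - q‖ ^ 2 / (2 * σ ^ 2)) * ∫ z : V, exp (-(2 / σ ^ 2) * ‖z‖ ^ 2) := by
  simp_rw [gaussBump_mul_gaussBump hσ, integral_const_mul,
    integral_sub_right_eq_self (fun z : V => exp (-(2 / σ ^ 2) * ‖z‖ ^ 2))]

lemma memLp_gaussBump {σ : ℝ} (hσ : σ ≠ 0) (p : V) : MemLp (gaussBump σ p) 2 := by
  have hcont : Continuous (gaussBump σ p) := by unfold gaussBump; fun_prop
  refine (memLp_two_iff_integrable_sq hcont.aestronglyMeasurable).2 ?_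
  have hb : 0 < 2 / σ ^ 2 := by positivity
  simp_rw [sq, gaussBump_mul_gaussBump hσ]
  exact ((integrable_exp_neg_mul_sq_norm hb).comp_sub_right _).const_mul _

end Bump

variable {d : ℕ}

local notation "E" => EuclideanSpace ℝ (Fin d)

theorem exists_gaussK_eq_inner {σ : ℝ} (hσ : σ ≠ 0) :
    ∃ Φ : E → Lp ℝ 2 (volume : Measure E),
      ∀ p q, gaussK σ p q = ⟪Φ p, Φ q⟫_ℝ := by
  set I := ∫ z : E, exp (-(2 / σ ^ 2) * ‖z‖ ^ 2) with hI_def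
  have hI : 0 < I := integral_exp_neg_mul_sq_norm_pos (by positivity)
  refine ⟨fun p => (σ / √I) • (memLp_gaussBump hσ p).toLp, fun p q => ?_⟩
  rw [real_inner_smul_left, real_inner_smul_right, inner_toLp_toLp,
    integral_gaussBump_mul_gaussBump hσ, ← hI_def, gaussK]
  field_simp
  rw [sq_sqrt hI.le]

lemma gaussK_self (σ : ℝ) (p : E) : gaussK σ p p = σ ^ 2 := by
  simp [gaussK]

lemma kap_dirac_dirac (σ : ℝ) (y z : E) :
    kap σ (Measure.dirac y) (Measure.dirac z) = gaussK σ y z := by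
  simp only [kap, integral_dirac]

lemma DK_dirac (σ : ℝ) (μ : Measure E) (y : E) :
    DK σ μ (Measure.dirac y) = √(kap σ μ μ + σ ^ 2 - 2 * kap σ μ (Measure.dirac y)) := by
  rw [DK, kap_dirac_dirac, gaussK_self]

lemma DK_dirac_le_DK_dirac_of_kap_le (σ : ℝ) (μ : Measure E) {y z : E}
    (h : kap σ μ (Measure.dirac z) ≤ kap σ μ (Measure.dirac y)) :
    DK σ μ (Measure.dirac y) ≤ DK σ μ (Measure.dirac z) := by
  rw [DK_dirac, DK_dirac]
  exact sqrt_le_sqrt (by linarith)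

lemma integral_empMeasure (P : Finset E) (f : E → ℝ) :
    ∫ x, f x ∂empMeasure P = (P.card : ℝ)⁻¹ * ∑ p ∈ P, f p := by
  rw [empMeasure, integral_smul_measure,
    integral_finsetSum_measure fun p _ => integrable_dirac enorm_lt_top]
  simp [integral_dirac]

section FeatureMap

variable {H : Type*} [NormedAddCommGroup H] [InnerProductSpace ℝ H] {σ : ℝ}
  {Φ : EuclideanSpace ℝ (Fin d) → H}

lemma sqrt_norm_sq_add_norm_sq_sub_two_mul_inner (x y : H) :
    √(‖x‖ ^ 2 + ‖y‖ ^ 2 - 2 * ⟪x, y⟫_ℝ) = ‖x - y‖ := by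
  rw [← sqrt_sq (norm_nonneg (x - y)), norm_sub_sq_real]
  ring_nf

noncomputable def meanEmbedding (Φ : E → H) (P : Finset E) : H :=
  (P.card : ℝ)⁻¹ • ∑ p ∈ P, Φ p

lemma kap_empMeasure_dirac (hΦ : ∀ p q, gaussK σ p q = ⟪Φ p, Φ q⟫_ℝ) (P : Finset E) (y : E) :
    kap σ (empMeasure P) (Measure.dirac y) = ⟪meanEmbedding Φ P, Φ y⟫_ℝ := by
  simp only [kap, integral_dirac, integral_empMeasure, meanEmbedding, real_inner_smul_left,
    sum_inner, hΦ]

lemma kap_empMeasure_empMeasure (hΦ : ∀ p q, gaussK σ p q = ⟪Φ p, Φ q⟫_ℝ) (P : Finset E) :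
    kap σ (empMeasure P) (empMeasure P) = ‖meanEmbedding Φ P‖ ^ 2 := by
  simp only [← real_inner_self_eq_norm_sq, kap, integral_empMeasure, meanEmbedding,
    real_inner_smul_left, real_inner_smul_right, sum_inner, inner_sum, hΦ, Finset.mul_sum]
  exact Finset.sum_comm

lemma DK_empMeasure_dirac (hΦ : ∀ p q, gaussK σ p q = ⟪Φ p, Φ q⟫_ℝ) (P : Finset E) (y : E) :
    DK σ (empMeasure P) (Measure.dirac y) = ‖meanEmbedding Φ P - Φ y‖ := by
  rw [DK_dirac, kap_empMeasure_empMeasure hΦ, kap_empMeasure_dirac hΦ, ← gaussK_self σ y, hΦ,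
    real_inner_self_eq_norm_sq, sqrt_norm_sq_add_norm_sq_sub_two_mul_inner]

lemma DKpt_eq_norm_sub (hΦ : ∀ p q, gaussK σ p q = ⟪Φ p, Φ q⟫_ℝ) (p q : E) :
    DKpt σ p q = ‖Φ p - Φ q‖ := by
  rw [DKpt, DK, kap_dirac_dirac, kap_dirac_dirac, kap_dirac_dirac, hΦ, hΦ, hΦ,
    real_inner_self_eq_norm_sq, real_inner_self_eq_norm_sq,
    sqrt_norm_sq_add_norm_sq_sub_two_mul_inner]

end FeatureMap

theorem DKpt_le_dKmu_add_dKmu {σ : ℝ} (hσ : σ ≠ 0) (P : Finset E) (p q : E) :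
    DKpt σ p q ≤ dKmu σ (empMeasure P) p + dKmu σ (empMeasure P) q := by
  obtain ⟨Φ, hΦ⟩ := exists_gaussK_eq_inner hσ
  rw [DKpt_eq_norm_sub hΦ, dKmu, dKmu, DK_empMeasure_dirac hΦ, DK_empMeasure_dirac hΦ,
    norm_sub_rev _ (Φ p)]
  exact norm_sub_le_norm_sub_add_norm_sub _ _ _

lemma Kpow_le_of_mem (σ : ℝ) {Q : Finset E} (hQ : Q.Nonempty) (μ : Measure E) (x : E) {p : E}
    (hp : p ∈ Q) : Kpow σ Q hQ μ x ≤ √(DKpt σ p x ^ 2 + dKmu σ μ p ^ 2) :=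
  sqrt_le_sqrt (Finset.inf'_le _ hp)

end GaussianKernel

open GaussianKernel

open scoped Classical in
theorem kernel_power_distance_hatPPlus_general {d : ℕ} (σ : ℝ) (hσ : 0 < σ)
    (P : Finset (EuclideanSpace ℝ (Fin d)))
    (pPlus phat : EuclideanSpace ℝ (Fin d))
    (hmax : ∀ q : EuclideanSpace ℝ (Fin d),
      kap σ (empMeasure P) (Measure.dirac q) ≤ kap σ (empMeasure P) (Measure.dirac pPlus))
    (hphat : DK σ (empMeasure P) (Measure.dirac phat)
      ≤ (3 / 2) * DK σ (empMeasure P) (Measure.dirac pPlus)) :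
    ∀ x : EuclideanSpace ℝ (Fin d),
      Kpow σ (insert phat P) (Finset.insert_nonempty _ _) (empMeasure P) x
        ≤ Real.sqrt 71 * DK σ (empMeasure P) (Measure.dirac x) := by
  intro x
  set μ := empMeasure P
  set c := DK σ μ (Measure.dirac x)
  have hplus : DK σ μ (Measure.dirac pPlus) ≤ c := DK_dirac_le_DK_dirac_of_kap_le σ μ (hmax x)
  have hhat : dKmu σ μ phat ≤ 3 / 2 * c := hphat.trans (by gcongr)
  have htri : DKpt σ phat x ≤ dKmu σ μ phat + c := DKpt_le_dKmu_add_dKmu hσ.ne' P phat x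
  have hc : 0 ≤ c := sqrt_nonneg _
  have hhat_nonneg : 0 ≤ dKmu σ μ phat := sqrt_nonneg _
  have htri_nonneg : 0 ≤ DKpt σ phat x := sqrt_nonneg _
  calc Kpow σ (insert phat P) _ μ x ≤ √(DKpt σ phat x ^ 2 + dKmu σ μ phat ^ 2) :=
        Kpow_le_of_mem σ _ μ x (Finset.mem_insert_self phat P)
    _ ≤ √(71 * c ^ 2) := sqrt_le_sqrt (by nlinarith)
    _ = √71 * c := by rw [sqrt_mul (by norm_num), sqrt_sq hc]

open scoped Classical in
/-- If `p₊` maximizes `kde_{μ_P}` over `ℝ^d` and `p̂₊` satisfies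
`D_K(μ_P, δ_{p̂₊}) ≤ (3/2)·D_K(μ_P, δ_{p₊})`, then for every `x`,
`Kpow_{P ∪ {p̂₊}}(μ_P, x) ≤ √71 · D_K(μ_P, δ_x)`. -/
theorem kernel_power_distance_hatPPlus {d : ℕ} (hd : 1 ≤ d) (σ : ℝ) (hσ : 0 < σ)
    (P : Finset (EuclideanSpace ℝ (Fin d))) (hP : P.Nonempty)
    (pPlus phat : EuclideanSpace ℝ (Fin d))
    (hmax : ∀ q : EuclideanSpace ℝ (Fin d),
      kap σ (empMeasure P) (Measure.dirac q) ≤ kap σ (empMeasure P) (Measure.dirac pPlus))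
    (hphat : DK σ (empMeasure P) (Measure.dirac phat)
      ≤ (3 / 2) * DK σ (empMeasure P) (Measure.dirac pPlus)) :
    ∀ x : EuclideanSpace ℝ (Fin d),
      Kpow σ (insert phat P) (Finset.insert_nonempty _ _) (empMeasure P) x
        ≤ Real.sqrt 71 * DK σ (empMeasure P) (Measure.dirac x) :=
  kernel_power_distance_hatPPlus_general σ hσ P pPlus phat hmax hphat
end

section
/- For any points p, q ∈ ℝ^d it always holds that D_K(p,q) ≤ ‖p − q‖; moreover, if ‖p − q‖ ≤ √3·σ, then D_K(p,q) ≥ ‖p − q‖/2. -/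
open MeasureTheory

/-! Writing `s = ‖p - q‖² / (2σ²)`, one has `D_K(p,q)² = 2σ²(1 - e^{-s})` and `‖p - q‖² = 2σ² s`,
so both bounds compare `1 - e^{-s}` with `s`: from above by `1 - s ≤ e^{-s}`, and from below by
`1 - e^{-s} ≥ s / (1 + s) ≥ s / 4`, which holds once `s ≤ 3`. -/

open Real

lemma Real.div_one_add_le_one_sub_exp_neg {x : ℝ} (hx : 0 ≤ x) : x / (1 + x) ≤ 1 - exp (-x) := by
  have h1x : 0 < 1 + x := by linarith
  have : exp (-x) ≤ (1 + x)⁻¹ := by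
    rw [exp_neg]
    exact inv_anti₀ h1x (by linarith [add_one_le_exp x])
  calc x / (1 + x) = 1 - (1 + x)⁻¹ := by field_simp; ring
    _ ≤ 1 - exp (-x) := by linarith

lemma Real.sqrt_mul_one_sub_exp_neg_le {c r : ℝ} (hc : 0 < c) (hr : 0 ≤ r) :
    √(c * (1 - exp (-(r ^ 2 / c)))) ≤ r := by
  refine (sqrt_le_left hr).2 ?_
  calc c * (1 - exp (-(r ^ 2 / c))) ≤ c * (r ^ 2 / c) := by
        gcongr; linarith [one_sub_le_exp_neg (r ^ 2 / c)]
    _ = r ^ 2 := by field_simp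

lemma Real.half_le_sqrt_mul_one_sub_exp_neg {c r : ℝ} (hc : 0 < c) (hrc : r ^ 2 ≤ 3 * c) :
    r / 2 ≤ √(c * (1 - exp (-(r ^ 2 / c)))) := by
  set s := r ^ 2 / c with hs
  have hs0 : 0 ≤ s := by positivity
  have hs3 : s ≤ 3 := by rw [hs, div_le_iff₀ hc]; linarith
  refine le_sqrt_of_sq_le ?_
  calc (r / 2) ^ 2 = c * (s / 4) := by rw [hs]; field_simp; ring
    _ ≤ c * (s / (1 + s)) := by gcongr; linarith
    _ ≤ c * (1 - exp (-s)) := by gcongr; exact div_one_add_le_one_sub_exp_neg hs0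

lemma DKpt_eq {d : ℕ} (σ : ℝ) (p q : EuclideanSpace ℝ (Fin d)) :
    DKpt σ p q = √(2 * σ ^ 2 * (1 - exp (-(‖p - q‖ ^ 2 / (2 * σ ^ 2))))) := by
  simp only [DKpt, DK, kap, integral_dirac, gaussK, sub_self, norm_zero, neg_div]
  congr 1
  norm_num
  ring

theorem kernel_distance_vs_euclidean_general {d : ℕ} (σ : ℝ) (hσ : 0 < σ)
    (p q : EuclideanSpace ℝ (Fin d)) :
    DKpt σ p q ≤ ‖p - q‖ ∧
    (‖p - q‖ ≤ Real.sqrt 3 * σ → ‖p - q‖ / 2 ≤ DKpt σ p q) := by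
  have hc : 0 < 2 * σ ^ 2 := by positivity
  rw [DKpt_eq]
  refine ⟨sqrt_mul_one_sub_exp_neg_le hc (norm_nonneg _),
    fun h => half_le_sqrt_mul_one_sub_exp_neg hc ?_⟩
  calc ‖p - q‖ ^ 2 ≤ (√3 * σ) ^ 2 := by gcongr
    _ = 3 * σ ^ 2 := by rw [mul_pow, sq_sqrt (by norm_num)]
    _ ≤ 3 * (2 * σ ^ 2) := by linarith [sq_nonneg σ]

/-- `D_K(p,q) ≤ ‖p − q‖` always, and if `‖p − q‖ ≤ √3·σ` then `D_K(p,q) ≥ ‖p − q‖/2`. -/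
theorem kernel_distance_vs_euclidean {d : ℕ} (hd : 1 ≤ d) (σ : ℝ) (hσ : 0 < σ)
    (p q : EuclideanSpace ℝ (Fin d)) :
    DKpt σ p q ≤ ‖p - q‖ ∧
    (‖p - q‖ ≤ Real.sqrt 3 * σ → ‖p - q‖ / 2 ≤ DKpt σ p q) :=
  kernel_distance_vs_euclidean_general σ hσ p q
end

section
/- There is no Lipschitz constant γ relating the Wasserstein-2 distance to the kernel distance: for every real γ > 0 there exist finitely supported probability measures μ and ν on ℝ^d such that W₂(μ,ν) > γ·D_K(μ,ν). -/
open MeasureTheory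

/-- The Wasserstein-2 distance: infimum over couplings `π` of `μ` and `ν`
of `√(∫ ‖x−y‖² dπ)`. -/
noncomputable def W2 {d : ℕ} (μ ν : Measure (EuclideanSpace ℝ (Fin d))) : ℝ :=
  sInf {r : ℝ |
    ∃ π : Measure (EuclideanSpace ℝ (Fin d) × EuclideanSpace ℝ (Fin d)),
      IsProbabilityMeasure π ∧ π.map Prod.fst = μ ∧ π.map Prod.snd = ν ∧
      r = Real.sqrt (∫ z, ‖z.1 - z.2‖ ^ 2 ∂π)}

/-- No Lipschitz constant `γ` bounds `W₂` by `γ·D_K`: for every `γ > 0` there are finitely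
supported probability measures `μ`, `ν` with `W₂(μ,ν) > γ·D_K(μ,ν)`. -/
theorem no_lipschitz_W2_vs_kernel_distance {d : ℕ} (hd : 1 ≤ d) (σ : ℝ) (hσ : 0 < σ) :
    ∀ γ : ℝ, 0 < γ →
      ∃ μ ν : Measure (EuclideanSpace ℝ (Fin d)),
        IsProbabilityMeasure μ ∧ IsProbabilityMeasure ν ∧
        (∃ S : Finset (EuclideanSpace ℝ (Fin d)), μ (↑S : Set (EuclideanSpace ℝ (Fin d)))ᶜ = 0) ∧
        (∃ T : Finset (EuclideanSpace ℝ (Fin d)), ν (↑T : Set (EuclideanSpace ℝ (Fin d)))ᶜ = 0) ∧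
        γ * DK σ μ ν < W2 μ ν := by
  intro γ hγ
  set c : ℝ := γ * (Real.sqrt 2 * σ) + 1 with hc
  have hc0 : 0 < c := by
    have h2 : (0:ℝ) < Real.sqrt 2 := Real.sqrt_pos.mpr (by norm_num)
    positivity
  set p : EuclideanSpace ℝ (Fin d) := 0 with hp0
  set q : EuclideanSpace ℝ (Fin d) := c • EuclideanSpace.single (⟨0, hd⟩ : Fin d) 1 with hq0
  have hpq : ‖p - q‖ = c := by
    rw [hp0, hq0, zero_sub, norm_neg, norm_smul, EuclideanSpace.norm_single]
    simp [abs_of_pos hc0]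
  refine ⟨Measure.dirac p, Measure.dirac q, inferInstance, inferInstance,
    ⟨{p}, by simp⟩, ⟨{q}, by simp⟩, ?_⟩
  -- DK bound
  have hDK : DK σ (Measure.dirac p) (Measure.dirac q) ≤ Real.sqrt 2 * σ := by
    have h1 : kap σ (Measure.dirac p) (Measure.dirac p) = σ ^ 2 := by
      simp [kap, integral_dirac, gaussK]
    have h2 : kap σ (Measure.dirac q) (Measure.dirac q) = σ ^ 2 := by
      simp [kap, integral_dirac, gaussK]
    have h3 : kap σ (Measure.dirac p) (Measure.dirac q) = gaussK σ p q := by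
      simp [kap, integral_dirac]
    have hle : kap σ (Measure.dirac p) (Measure.dirac p)
        + kap σ (Measure.dirac q) (Measure.dirac q)
        - 2 * kap σ (Measure.dirac p) (Measure.dirac q) ≤ 2 * σ ^ 2 := by
      rw [h1, h2, h3, gaussK]
      nlinarith [Real.exp_pos (-‖p - q‖ ^ 2 / (2 * σ ^ 2)), sq_nonneg σ]
    calc DK σ (Measure.dirac p) (Measure.dirac q) ≤ Real.sqrt (2 * σ ^ 2) :=
          Real.sqrt_le_sqrt hle
      _ = Real.sqrt 2 * σ := by
          rw [Real.sqrt_mul (by norm_num), Real.sqrt_sq hσ.le]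
  -- W2 computation
  have hW2 : W2 (Measure.dirac p) (Measure.dirac q) = ‖p - q‖ := by
    have hset : {r : ℝ |
        ∃ π : Measure (EuclideanSpace ℝ (Fin d) × EuclideanSpace ℝ (Fin d)),
          IsProbabilityMeasure π ∧ π.map Prod.fst = Measure.dirac p ∧
          π.map Prod.snd = Measure.dirac q ∧
          r = Real.sqrt (∫ z, ‖z.1 - z.2‖ ^ 2 ∂π)} = {‖p - q‖} := by
      ext r
      simp only [Set.mem_setOf_eq, Set.mem_singleton_iff]
      constructor
      · rintro ⟨π, hπ, h1, h2, rfl⟩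
        have ha : ∀ᵐ z ∂π, z.1 = p := by
          rw [ae_iff]
          have : π {z : EuclideanSpace ℝ (Fin d) × EuclideanSpace ℝ (Fin d) | ¬ z.1 = p}
              = (π.map Prod.fst) {p}ᶜ := by
            rw [Measure.map_apply measurable_fst
              (MeasurableSet.compl (measurableSet_singleton p))]
            rfl
          rw [this, h1]
          simp
        have hb : ∀ᵐ z ∂π, z.2 = q := by
          rw [ae_iff]
          have : π {z : EuclideanSpace ℝ (Fin d) × EuclideanSpace ℝ (Fin d) | ¬ z.2 = q}
              = (π.map Prod.snd) {q}ᶜ := by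
            rw [Measure.map_apply measurable_snd
              (MeasurableSet.compl (measurableSet_singleton q))]
            rfl
          rw [this, h2]
          simp
        have hint : ∫ z, ‖z.1 - z.2‖ ^ 2 ∂π = ‖p - q‖ ^ 2 := by
          rw [integral_congr_ae (g := fun _ => ‖p - q‖ ^ 2)]
          · simp
          · filter_upwards [ha, hb] with z h1' h2'
            rw [h1', h2']
        rw [hint, Real.sqrt_sq (norm_nonneg _)]
      · rintro rfl
        refine ⟨Measure.dirac (p, q), inferInstance, ?_, ?_, ?_⟩
        · rw [Measure.map_dirac' measurable_fst]
        · rw [Measure.map_dirac' measurable_snd]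
        · rw [integral_dirac, Real.sqrt_sq (norm_nonneg _)]
    rw [W2, hset, csInf_singleton]
  rw [hW2, hpq]
  calc γ * DK σ (Measure.dirac p) (Measure.dirac q) ≤ γ * (Real.sqrt 2 * σ) :=
        mul_le_mul_of_nonneg_left hDK hγ.le
    _ < c := by rw [hc]; linarith
end

section
/- For any two compactly supported probability measures μ and ν on ℝ^d, the kernel distance with respect to the σ-scaled Gaussian kernel satisfies lim_{σ→∞} D_{K_σ}(μ,ν) = ‖μ̄ − ν̄‖, i.e., the function σ ↦ D_{K_σ}(μ,ν) tends to ‖μ̄ − ν̄‖ as σ → ∞. -/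
/-!
Because `K_σ(p,q) - σ²` is `σ²(exp(-‖p - q‖²/(2σ²)) - 1)`, it is bounded by `‖p - q‖²/2` and
tends to `-‖p - q‖²/2` as `σ → ∞`. By dominated convergence,
`κ_σ(μ,ν) - σ² → -½ ∫∫ ‖p - q‖² dμ dν = ⟪μ̄, ν̄⟫ - (∫ ‖p‖² dμ + ∫ ‖q‖² dν)/2`.
In `D_{K_σ}(μ,ν)² = κ_σ(μ,μ) + κ_σ(ν,ν) - 2κ_σ(μ,ν)` the diverging `σ²` terms and the
second moments cancel, leaving `‖μ̄‖² + ‖ν̄‖² - 2⟪μ̄, ν̄⟫ = ‖μ̄ - ν̄‖²`.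
-/

open MeasureTheory

/-- The mean of a measure on `ℝ^d`. -/
noncomputable def meanM {d : ℕ} (μ : Measure (EuclideanSpace ℝ (Fin d))) :
    EuclideanSpace ℝ (Fin d) :=
  ∫ p, p ∂μ

open Filter Topology
open scoped RealInnerProductSpace

theorem Continuous.integrable_of_isCompact_of_measure_compl_eq_zero {X F : Type*}
    [TopologicalSpace X] [T2Space X] [MeasurableSpace X] [OpensMeasurableSpace X]
    [NormedAddCommGroup F] {μ : Measure X} [IsFiniteMeasure μ] {f : X → F} (hf : Continuous f)
    {s : Set X} (hs : IsCompact s) (hμs : μ sᶜ = 0) : Integrable f μ := by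
  rw [← Measure.restrict_eq_self_of_ae_mem (mem_ae_iff.2 hμs)]
  exact hf.continuousOn.integrableOn_compact hs

section SecondMoment

variable {E : Type*} [NormedAddCommGroup E] [MeasurableSpace E] [BorelSpace E]
  [SecondCountableTopology E] {μ ν : Measure E}

theorem integrable_id_of_integrable_norm_sq [IsFiniteMeasure μ]
    (hμ : Integrable (fun p => ‖p‖ ^ 2) μ) : Integrable (fun p => p) μ :=
  ((memLp_two_iff_integrable_sq_norm aestronglyMeasurable_id).2 hμ).integrable one_le_two

theorem integrable_norm_sub_sq_prod [IsFiniteMeasure μ] [IsFiniteMeasure ν]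
    (hμ : Integrable (fun p => ‖p‖ ^ 2) μ) (hν : Integrable (fun q => ‖q‖ ^ 2) ν) :
    Integrable (fun z : E × E => ‖z.1 - z.2‖ ^ 2) (μ.prod ν) := by
  refine Integrable.mono' ((hμ.comp_fst ν).add (hν.comp_snd μ) |>.const_mul 2)
    (by fun_prop) (ae_of_all _ fun z => ?_)
  have h := norm_sub_le z.1 z.2
  rw [Real.norm_of_nonneg (by positivity)]
  simp only [Pi.add_apply]
  nlinarith [norm_nonneg (z.1 - z.2), sq_nonneg (‖z.1‖ - ‖z.2‖)]

variable [InnerProductSpace ℝ E] [CompleteSpace E] [IsProbabilityMeasure μ]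
  [IsProbabilityMeasure ν]

theorem integral_norm_sub_sq (hν : Integrable (fun q => ‖q‖ ^ 2) ν) (p : E) :
    ∫ q, ‖p - q‖ ^ 2 ∂ν = ‖p‖ ^ 2 - 2 * ⟪p, ∫ q, q ∂ν⟫ + ∫ q, ‖q‖ ^ 2 ∂ν := by
  have hid := integrable_id_of_integrable_norm_sq hν
  have hinner : Integrable (fun q => 2 * ⟪p, q⟫) ν := (hid.const_inner p).const_mul 2
  have hconst : Integrable (fun q : E => ‖p‖ ^ 2 - 2 * ⟪p, q⟫) ν :=
    (integrable_const _).sub hinner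
  simp_rw [norm_sub_sq_real]
  rw [integral_add hconst hν, integral_sub (integrable_const _) hinner, integral_const,
    integral_const_mul, integral_inner hid]
  simp

theorem integral_prod_norm_sub_sq (hμ : Integrable (fun p => ‖p‖ ^ 2) μ)
    (hν : Integrable (fun q => ‖q‖ ^ 2) ν) :
    ∫ z : E × E, ‖z.1 - z.2‖ ^ 2 ∂μ.prod ν =
      ∫ p, ‖p‖ ^ 2 ∂μ - 2 * ⟪∫ p, p ∂μ, ∫ q, q ∂ν⟫ + ∫ q, ‖q‖ ^ 2 ∂ν := by
  have hinner : Integrable (fun p => 2 * ⟪p, ∫ q, q ∂ν⟫) μ :=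
    ((integrable_id_of_integrable_norm_sq hμ).inner_const _).const_mul 2
  have hsub : Integrable (fun p => ‖p‖ ^ 2 - 2 * ⟪p, ∫ q, q ∂ν⟫) μ := hμ.sub hinner
  rw [integral_prod _ (integrable_norm_sub_sq_prod hμ hν)]
  simp_rw [integral_norm_sub_sq hν]
  rw [integral_add hsub (integrable_const _), integral_sub hμ hinner,
    integral_const_mul, integral_const]
  simp_rw [real_inner_comm (∫ q, q ∂ν)]
  rw [integral_inner (integrable_id_of_integrable_norm_sq hμ)]
  simp

end SecondMoment

section GaussianKernel

variable {d : ℕ}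

theorem continuous_gaussK (σ : ℝ) :
    Continuous fun z : EuclideanSpace ℝ (Fin d) × EuclideanSpace ℝ (Fin d) =>
      gaussK σ z.1 z.2 := by
  unfold gaussK
  fun_prop

theorem abs_gaussK_le (σ : ℝ) (p q : EuclideanSpace ℝ (Fin d)) : |gaussK σ p q| ≤ σ ^ 2 := by
  have hexp : Real.exp (-‖p - q‖ ^ 2 / (2 * σ ^ 2)) ≤ 1 :=
    Real.exp_le_one_iff.2 (div_nonpos_of_nonpos_of_nonneg (by simp) (by positivity))
  rw [gaussK, abs_of_nonneg (by positivity)]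
  exact mul_le_of_le_one_right (sq_nonneg σ) hexp

theorem abs_gaussK_sub_sq_le (σ : ℝ) (p q : EuclideanSpace ℝ (Fin d)) :
    |gaussK σ p q - σ ^ 2| ≤ ‖p - q‖ ^ 2 / 2 := by
  rcases eq_or_ne σ 0 with rfl | hσ
  · rw [gaussK, zero_pow two_ne_zero, zero_mul, sub_zero, abs_zero]; positivity
  set x := -‖p - q‖ ^ 2 / (2 * σ ^ 2)
  have hx : x ≤ 0 := div_nonpos_of_nonpos_of_nonneg (by simp) (by positivity)
  have hσx : σ ^ 2 * -x = ‖p - q‖ ^ 2 / 2 := by simp only [x]; field_simp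
  have hexp : 1 - Real.exp x ≤ -x := by linarith [Real.add_one_le_exp x]
  rw [gaussK, abs_sub_comm, abs_of_nonneg (by nlinarith [Real.exp_le_one_iff.2 hx]), ← hσx]
  nlinarith [sq_nonneg σ]

/-- With `t = σ⁻²`, the quantity `K_σ(p,q) - σ²` is the difference quotient at `0` of
`t ↦ exp (-‖p - q‖² t / 2)`. -/
theorem tendsto_gaussK_sub_sq (p q : EuclideanSpace ℝ (Fin d)) :
    Tendsto (fun σ : ℝ => gaussK σ p q - σ ^ 2) atTop (𝓝 (-‖p - q‖ ^ 2 / 2)) := by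
  have hderiv : HasDerivAt (fun t => Real.exp (-‖p - q‖ ^ 2 / 2 * t)) (-‖p - q‖ ^ 2 / 2) 0 := by
    simpa using ((hasDerivAt_id (0 : ℝ)).const_mul (-‖p - q‖ ^ 2 / 2)).exp
  have ht : Tendsto (fun σ : ℝ => (σ ^ 2)⁻¹) atTop (𝓝[>] 0) :=
    tendsto_inv_atTop_nhdsGT_zero.comp (tendsto_pow_atTop two_ne_zero)
  refine (hderiv.tendsto_slope_zero_right.comp ht).congr fun σ => ?_
  simp only [Function.comp, zero_add, mul_zero, Real.exp_zero, smul_eq_mul, inv_inv, gaussK]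
  ring_nf

end GaussianKernel

section KernelDistance

variable {d : ℕ} (μ ν : Measure (EuclideanSpace ℝ (Fin d))) [IsProbabilityMeasure μ]
  [IsProbabilityMeasure ν]

theorem integrable_gaussK_s17 (σ : ℝ) :
    Integrable (fun z : EuclideanSpace ℝ (Fin d) × EuclideanSpace ℝ (Fin d) => gaussK σ z.1 z.2)
      (μ.prod ν) :=
  .mono' (integrable_const (σ ^ 2)) (continuous_gaussK σ).aestronglyMeasurable
    (ae_of_all _ fun z => abs_gaussK_le σ z.1 z.2)

theorem kap_eq_integral_prod (σ : ℝ) :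
    kap σ μ ν = ∫ z : EuclideanSpace ℝ (Fin d) × EuclideanSpace ℝ (Fin d), gaussK σ z.1 z.2
      ∂μ.prod ν :=
  (integral_prod _ (integrable_gaussK_s17 μ ν σ)).symm

variable {μ ν}

theorem tendsto_kap_sub_sq (hμ : Integrable (fun p => ‖p‖ ^ 2) μ)
    (hν : Integrable (fun q => ‖q‖ ^ 2) ν) :
    Tendsto (fun σ : ℝ => kap σ μ ν - σ ^ 2) atTop
      (𝓝 (⟪meanM μ, meanM ν⟫ - (∫ p, ‖p‖ ^ 2 ∂μ + ∫ q, ‖q‖ ^ 2 ∂ν) / 2)) := by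
  have hdom : Tendsto (fun σ : ℝ => ∫ z, (gaussK σ z.1 z.2 - σ ^ 2) ∂μ.prod ν) atTop
      (𝓝 (∫ z, -‖z.1 - z.2‖ ^ 2 / 2 ∂μ.prod ν)) :=
    tendsto_integral_filter_of_dominated_convergence _
      (.of_forall fun σ => ((continuous_gaussK σ).sub continuous_const).aestronglyMeasurable)
      (.of_forall fun σ => ae_of_all _ fun z => abs_gaussK_sub_sq_le σ z.1 z.2)
      ((integrable_norm_sub_sq_prod hμ hν).div_const 2)
      (ae_of_all _ fun z => tendsto_gaussK_sub_sq z.1 z.2)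
  have hlim : ∫ z, -‖z.1 - z.2‖ ^ 2 / 2 ∂μ.prod ν =
      ⟪meanM μ, meanM ν⟫ - (∫ p, ‖p‖ ^ 2 ∂μ + ∫ q, ‖q‖ ^ 2 ∂ν) / 2 := by
    rw [integral_div, integral_neg, integral_prod_norm_sub_sq hμ hν, meanM, meanM]
    ring
  rw [← hlim]
  refine hdom.congr fun σ => ?_
  rw [integral_sub (integrable_gaussK_s17 μ ν σ) (integrable_const _), integral_const,
    kap_eq_integral_prod]
  simp

end KernelDistance

theorem kernel_distance_tendsto_mean_distance_general {d : ℕ}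
    (μ ν : Measure (EuclideanSpace ℝ (Fin d)))
    [IsProbabilityMeasure μ] [IsProbabilityMeasure ν]
    (hμc : ∃ s : Set (EuclideanSpace ℝ (Fin d)), IsCompact s ∧ μ sᶜ = 0)
    (hνc : ∃ s : Set (EuclideanSpace ℝ (Fin d)), IsCompact s ∧ ν sᶜ = 0) :
    Filter.Tendsto (fun σ : ℝ => DK σ μ ν) Filter.atTop
      (nhds ‖meanM μ - meanM ν‖) := by
  obtain ⟨s, hs, hμs⟩ := hμc
  obtain ⟨t, ht, hνt⟩ := hνc
  have hμ : Integrable (fun p => ‖p‖ ^ 2) μ :=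
    (by fun_prop : Continuous fun p : EuclideanSpace ℝ (Fin d) => ‖p‖ ^ 2)
      |>.integrable_of_isCompact_of_measure_compl_eq_zero hs hμs
  have hν : Integrable (fun q => ‖q‖ ^ 2) ν :=
    (by fun_prop : Continuous fun q : EuclideanSpace ℝ (Fin d) => ‖q‖ ^ 2)
      |>.integrable_of_isCompact_of_measure_compl_eq_zero ht hνt
  have hsq : Tendsto (fun σ : ℝ => kap σ μ μ + kap σ ν ν - 2 * kap σ μ ν) atTop
      (𝓝 (‖meanM μ - meanM ν‖ ^ 2)) := by
    have h := ((tendsto_kap_sub_sq hμ hμ).add (tendsto_kap_sub_sq hν hν)).sub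
      ((tendsto_kap_sub_sq hμ hν).const_mul 2)
    convert h using 2
    · ring
    · rw [norm_sub_sq_real, ← real_inner_self_eq_norm_sq, ← real_inner_self_eq_norm_sq]
      ring
  simpa only [DK, Real.sqrt_sq (norm_nonneg _)] using hsq.sqrt

/-- For compactly supported probability measures, the kernel distance with respect to the
`σ`-scaled Gaussian kernel tends to `‖μ̄ − ν̄‖` as `σ → ∞`. -/
theorem kernel_distance_tendsto_mean_distance {d : ℕ} (hd : 1 ≤ d)
    (μ ν : Measure (EuclideanSpace ℝ (Fin d)))
    [IsProbabilityMeasure μ] [IsProbabilityMeasure ν]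
    (hμc : ∃ s : Set (EuclideanSpace ℝ (Fin d)), IsCompact s ∧ μ sᶜ = 0)
    (hνc : ∃ s : Set (EuclideanSpace ℝ (Fin d)), IsCompact s ∧ ν sᶜ = 0) :
    Filter.Tendsto (fun σ : ℝ => DK σ μ ν) Filter.atTop
      (nhds ‖meanM μ - meanM ν‖) :=
  kernel_distance_tendsto_mean_distance_general μ ν hμc hνc
end
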